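/- Given a weakly controlled Moran construction and any t ≥ 0 with topological pressure P(t) ≥ 0, the set function M^t satisfies M^t(I^∞) > 0. -/

import Mathlib

open Metric Set Filter MeasureTheory Topology
open scoped ENNReal ENat

namespace Moran

/-- Composition of the maps of an IFS along a finite word:
`comp φ (i₁, …, iₙ) = φ i₁ ∘ ⋯ ∘ φ iₙ`. -/
def comp {ι M : Type*} (φ : ι → M → M) : List ι → M → M
  | [] => id
  | a :: l => φ a ∘ comp φ l

/-- The initial segment (of length `n`) of an infinite word. -/
def pre {ι : Type*} (j : ℕ → ι) (n : ℕ) : List ι := List.ofFn fun k : Fin n => j k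

/-- The cylinder set of a finite word, as a subset of the symbol space `I^∞`. -/
def cylinder {ι : Type*} (i : List ι) : Set (ℕ → ι) := {j | pre j i.length = i}

/-- Two finite words are incomparable if neither is an initial segment of the other. -/
def Incomp {ι : Type*} (i j : List ι) : Prop := ¬ i <+: j ∧ ¬ j <+: i

/-- A metric space is doubling if there is `κ` such that every ball of radius `2r`
can be covered by `κ` balls of radius `r`. -/
def DoublingSpace (M : Type*) [MetricSpace M] : Prop :=
  ∃ κ : ℕ, ∀ (x : M) (r : ℝ), ∃ s : Finset M,
    s.card ≤ κ ∧ ball x (2 * r) ⊆ ⋃ y ∈ s, ball y r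

/-- A weakly controlled Moran construction (WCMC) over the index set `ι`
in the metric space `M`. The sets are indexed by nonempty finite words,
modelled as nonempty lists; `i.dropLast` plays the role of `i⁻`. -/
structure WCMC (ι M : Type*) [Fintype ι] [MetricSpace M] where
  X : List ι → Set M
  compact : ∀ i : List ι, i ≠ [] → IsCompact (X i)
  diam_pos : ∀ i : List ι, i ≠ [] → 0 < diam (X i)
  D : ℝ
  one_le_D : 1 ≤ D
  nested : ∀ i : List ι, 2 ≤ i.length → X i ⊆ X i.dropLast
  small : ∃ n : ℕ, 1 ≤ n ∧ ∀ i : List ι, i.length = n → diam (X i) < D⁻¹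
  submult : ∀ i j : List ι, i ≠ [] → j ≠ [] →
    diam (X (i ++ j)) ≤ D * diam (X i) * diam (X j)
  lower : ∀ i : List ι, 2 ≤ i.length → D⁻¹ * diam (X i.dropLast) ≤ diam (X i)

/-- A controlled Moran construction (CMC). -/
structure CMC (ι M : Type*) [Fintype ι] [MetricSpace M] where
  X : List ι → Set M
  compact : ∀ i : List ι, i ≠ [] → IsCompact (X i)
  diam_pos : ∀ i : List ι, i ≠ [] → 0 < diam (X i)
  D : ℝ
  one_le_D : 1 ≤ D
  nested : ∀ i : List ι, 2 ≤ i.length → X i ⊆ X i.dropLast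
  small : ∃ n : ℕ, 1 ≤ n ∧ ∀ i : List ι, i.length = n → diam (X i) < D⁻¹
  controlled_le : ∀ i j : List ι, i ≠ [] → j ≠ [] →
    diam (X (i ++ j)) ≤ D * (diam (X i) * diam (X j))
  controlled_ge : ∀ i j : List ι, i ≠ [] → j ≠ [] →
    D⁻¹ * (diam (X i) * diam (X j)) ≤ diam (X (i ++ j))

/-- The limit set `E = π(I^∞)` of a Moran construction. -/
def limitSet {ι M : Type*} [MetricSpace M] (X : List ι → Set M) : Set M :=
  {x | ∃ j : ℕ → ι, ∀ n : ℕ, 1 ≤ n → x ∈ X (pre j n)}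

/-- `Z(r)`: the words whose construction piece has diameter at most `r` while the
parent piece has diameter greater than `r` (first-generation words with diameter
at most `r` are included). -/
def Zr {ι M : Type*} [MetricSpace M] (X : List ι → Set M) (r : ℝ) : Set (List ι) :=
  {i | i ≠ [] ∧ diam (X i) ≤ r ∧ (i.length = 1 ∨ r < diam (X i.dropLast))}

/-- `Z(x,r)`: the words of `Z(r)` whose construction piece meets `B(x,r)`. -/
def Zx {ι M : Type*} [MetricSpace M] (X : List ι → Set M) (x : M) (r : ℝ) :
    Set (List ι) :=
  {i | i ∈ Zr X r ∧ (X i ∩ ball x r).Nonempty}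

/-- The finite clustering property: `sup_{x ∈ E} limsup_{r ↓ 0} #Z(x,r) < ∞`. -/
def FCP {ι M : Type*} [MetricSpace M] (X : List ι → Set M) : Prop :=
  ∃ K : ℕ, ∀ x ∈ limitSet X,
    Filter.limsup (fun r : ℝ => (Zx X x r).encard) (𝓝[>] 0) ≤ (K : ℕ∞)

/-- The ball condition. -/
def BallCond {ι M : Type*} [MetricSpace M] (X : List ι → Set M) : Prop :=
  ∃ δ : ℝ, 0 < δ ∧ δ < 1 ∧ ∀ x ∈ limitSet X, ∃ rx > 0, ∀ r : ℝ, 0 < r → r < rx →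
    ∃ c : List ι → M, (∀ i ∈ Zx X x r, infDist (c i) (X i) < r) ∧
      (Zx X x r).Pairwise fun i j => Disjoint (ball (c i) (δ * r)) (ball (c j) (δ * r))

/-- Distance between two subsets of a metric space. -/
noncomputable def setDist {M : Type*} [MetricSpace M] (s t : Set M) : ℝ :=
  ENNReal.toReal (⨅ x ∈ s, EMetric.infEdist x t)

/-- Tractability of a Moran construction. -/
def Tractable {ι M : Type*} [MetricSpace M] (X : List ι → Set M) : Prop :=
  ∃ C : ℝ, 1 ≤ C ∧ ∀ r : ℝ, 0 < r → ∀ h i j : List ι, h ≠ [] →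
    i ∈ Zr X r → j ∈ Zr X r → setDist (X i) (X j) ≤ r →
      setDist (X (h ++ i)) (X (h ++ j)) ≤ C * diam (X h) * r

/-- The `n`-th pressure sum `Σ_{i ∈ I^n} diam(X_i)^t`. -/
noncomputable def presSum {ι M : Type*} [Fintype ι] [MetricSpace M]
    (X : List ι → Set M) (t : ℝ) (n : ℕ) : ℝ :=
  ∑ i : Fin n → ι, diam (X (List.ofFn i)) ^ t

/-- `P` is the topological pressure of the construction `X`:
`P(t) = lim_{n → ∞} (1/n) log Σ_{i ∈ I^n} diam(X_i)^t` for every `t ≥ 0`. -/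
def IsPressure {ι M : Type*} [Fintype ι] [MetricSpace M]
    (X : List ι → Set M) (P : ℝ → ℝ) : Prop :=
  ∀ t : ℝ, 0 ≤ t →
    Tendsto (fun n : ℕ => (1 / (n : ℝ)) * Real.log (presSum X t n)) atTop (𝓝 (P t))

/-- The covering number `N(E,r)`: the minimal number of open balls of radius `r`
needed to cover `E`. -/
noncomputable def coverNum {M : Type*} [MetricSpace M] (E : Set M) (r : ℝ) : ℕ :=
  sInf {k : ℕ | ∃ s : Finset M, s.card = k ∧ E ⊆ ⋃ y ∈ s, ball y r}

/-- The upper Minkowski dimension `limsup_{r ↓ 0} log N(E,r) / (−log r)`. -/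
noncomputable def upMink {M : Type*} [MetricSpace M] (E : Set M) : EReal :=
  Filter.limsup
    (fun r : ℝ => ((Real.log (coverNum E r) / (-Real.log r) : ℝ) : EReal)) (𝓝[>] 0)

/-- The `n`-th stage `M^ψ_n(A)` of the Carathéodory construction on the symbol
space: the infimum of `Σ_{i ∈ C} ψ(i)` over covers of `A` by cylinders of words of
length at least `n`. -/
noncomputable def Mpsin {ι : Type*} (ψ : List ι → ℝ) (n : ℕ) (A : Set (ℕ → ι)) :
    ℝ≥0∞ :=
  ⨅ (C : Set (List ι)) (_ : ∀ i ∈ C, i ≠ [] ∧ n ≤ i.length)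
    (_ : A ⊆ ⋃ i ∈ C, cylinder i), ∑' i : C, ENNReal.ofReal (ψ i)

/-- `M^ψ(A) = lim_{n → ∞} M^ψ_n(A)`; since the stages are nondecreasing in `n`,
the limit equals the supremum. -/
noncomputable def Mpsi {ι : Type*} (ψ : List ι → ℝ) (A : Set (ℕ → ι)) : ℝ≥0∞ :=
  ⨆ n : ℕ, Mpsin ψ n A

/-- A semiconformal iterated function system on `M`: finitely many contractive
injections `φ i` whose invariant set `E` has positive diameter, together with
semiconformality bounds `s̲_i, s̄_i` (comparable via `D`) for the iterated maps. -/
structure SCIFS (ι M : Type*) [Fintype ι] [MetricSpace M] where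
  φ : ι → M → M
  contr : ∀ i : ι, ∃ s : ℝ, 0 ≤ s ∧ s < 1 ∧ ∀ x y : M, dist (φ i x) (φ i y) ≤ s * dist x y
  inj : ∀ i : ι, Function.Injective (φ i)
  E : Set M
  E_compact : IsCompact E
  E_nonempty : E.Nonempty
  E_invariant : E = ⋃ i : ι, φ i '' E
  diamE_pos : 0 < diam E
  slo : List ι → ℝ
  shi : List ι → ℝ
  D : ℝ
  one_le_D : 1 ≤ D
  slo_pos : ∀ i : List ι, i ≠ [] → 0 < slo i
  slo_le_shi : ∀ i : List ι, i ≠ [] → slo i ≤ shi i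
  shi_lt_one : ∀ i : List ι, i ≠ [] → shi i < 1
  shi_le_D_slo : ∀ i : List ι, i ≠ [] → shi i ≤ D * slo i
  lower : ∀ i : List ι, i ≠ [] → ∀ x y : M,
    slo i * dist x y ≤ dist (comp φ i x) (comp φ i y)
  upper : ∀ i : List ι, i ≠ [] → ∀ x y : M,
    dist (comp φ i x) (comp φ i y) ≤ shi i * dist x y

/-- The Moran construction pieces `E_i = φ_i(E)` associated with an IFS. -/
def SCIFS.Xs {ι M : Type*} [Fintype ι] [MetricSpace M] (S : SCIFS ι M) :
    List ι → Set M := fun i => comp S.φ i '' S.E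

/-- The open set condition. -/
def OSC {ι M : Type*} [Fintype ι] [MetricSpace M] (S : SCIFS ι M) : Prop :=
  ∃ U : Set M, IsOpen U ∧ U.Nonempty ∧ ∀ i j : List ι, i ≠ [] → j ≠ [] →
    Incomp i j → Disjoint (comp S.φ i '' U) (comp S.φ j '' U)

/-- The strong open set condition. -/
def SOSC {ι M : Type*} [Fintype ι] [MetricSpace M] (S : SCIFS ι M) : Prop :=
  ∃ U : Set M, IsOpen U ∧ U.Nonempty ∧ (U ∩ S.E).Nonempty ∧
    ∀ i j : List ι, i ≠ [] → j ≠ [] →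
      Incomp i j → Disjoint (comp S.φ i '' U) (comp S.φ j '' U)

/-- An essential open set for an IFS: a dense open set meeting the invariant set. -/
def EssentialOpen {ι M : Type*} [Fintype ι] [MetricSpace M] (S : SCIFS ι M)
    (W : Set M) : Prop :=
  IsOpen W ∧ Dense W ∧ (W ∩ S.E).Nonempty

/-- A properly semiconformal IFS. -/
def ProperlySC {ι M : Type*} [Fintype ι] [MetricSpace M] (S : SCIFS ι M) : Prop :=
  ∃ W : Set M, EssentialOpen S W ∧ W ≠ univ ∧ ∀ x ∈ W, ∃ lam : ℝ, 1 ≤ lam ∧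
    ∀ i : List ι, i ≠ [] →
      infDist (comp S.φ i x) (comp S.φ i '' Wᶜ) ≤
        lam * infDist (comp S.φ i x) ((comp S.φ i '' W)ᶜ)

end Moran

/-!
Write `S(n) = Σ_{|i| = n} diam(X_i)^t`. By (W3) the sequence `D^t S(n)` is submultiplicative,
so by Fekete's lemma `P(t) = inf_n (1/n) log (D^t S(n))`, and `P(t) ≥ 0` gives `D^t S(n) ≥ 1`.
A sequence bounded below by `1` has a constant `K` and infinitely many times `N` with
`D^t S(m) ≤ K D^t S(N)` for all `m ≤ N` (if it is unbounded, take its record times).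

Since `I^∞` is compact and cylinders are open, it suffices to bound `Σ_{i ∈ F} diam(X_i)^t` from
below for a finite cylinder cover `F`. For such a time `N` beyond the lengths of the words in `F`,
every word of length `N` extends a word of `F`, and (W3) gives
`S(N) ≤ Σ_{i ∈ F} D^t diam(X_i)^t S(N - |i|) ≤ K D^t S(N) Σ_{i ∈ F} diam(X_i)^t`,
so `Σ_{i ∈ F} diam(X_i)^t ≥ (K D^t)⁻¹`.
-/

theorem Real.le_log_div_of_tendsto_of_submultiplicative {g : ℕ → ℝ}
    (hpos : ∀ n, n ≠ 0 → 0 < g n)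
    (hmul : ∀ m n, m ≠ 0 → n ≠ 0 → g (m + n) ≤ g m * g n) {L : ℝ}
    (hL : Tendsto (fun n : ℕ => Real.log (g n) / n) atTop (𝓝 L)) {m : ℕ} (hm : m ≠ 0) :
    L ≤ Real.log (g m) / m := by
  -- `g 0` is unconstrained, so Fekete's lemma is applied to `log ∘ g` with its value at `0` reset.
  set u : ℕ → ℝ := fun n => if n = 0 then 0 else Real.log (g n)
  have hu : Subadditive u := by
    intro a b
    rcases eq_or_ne a 0 with rfl | ha
    · simp [u]
    rcases eq_or_ne b 0 with rfl | hb
    · simp [u]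
    simp only [u, ha, hb, Nat.add_eq_zero_iff, and_self, if_false]
    rw [← Real.log_mul (hpos a ha).ne' (hpos b hb).ne']
    exact Real.log_le_log (hpos _ (by omega)) (hmul a b ha hb)
  have huL : Tendsto (fun n => u n / n) atTop (𝓝 L) :=
    hL.congr' <| (eventually_ne_atTop 0).mono fun n hn => by simp [u, hn]
  have hlim : hu.lim = L := tendsto_nhds_unique (hu.tendsto_lim huL.bddBelow_range) huL
  simpa [u, hm, hlim] using hu.lim_le_div huL.bddBelow_range hm

theorem exists_pos_frequently_forall_le_mul {g : ℕ → ℝ} (hg : ∀ᶠ n in atTop, 1 ≤ g n) :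
    ∃ K > 0, ∃ᶠ N in atTop, ∀ m ≤ N, g m ≤ K * g N := by
  classical
  by_cases hbdd : BddAbove (range g)
  · obtain ⟨S, hS⟩ := hbdd
    refine ⟨max S 1, by positivity, hg.frequently.mono fun N hN m _ => ?_⟩
    calc g m ≤ max S 1 * 1 := by simpa using (hS (mem_range_self m)).trans (le_max_left S 1)
      _ ≤ max S 1 * g N := by gcongr
  · -- `N` is the first time `g` exceeds its maximum on `[0, B]`: a record time after `B`
    refine ⟨1, one_pos, frequently_atTop.2 fun B => ?_⟩
    set V := (Finset.range (B + 1)).sup' Finset.nonempty_range_add_one g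
    have hV : ∀ m ≤ B, g m ≤ V := fun m hm =>
      Finset.le_sup' g (Finset.mem_range.2 (Nat.lt_succ_of_le hm))
    have hex : ∃ N, V < g N := by simpa using not_bddAbove_iff.1 hbdd V
    refine ⟨Nat.find hex, ?_, fun m hm => ?_⟩
    · by_contra! h
      exact (Nat.find_spec hex).not_ge (hV _ h.le)
    · rw [one_mul]
      rcases hm.lt_or_eq with hm | rfl
      · exact (not_lt.1 (Nat.find_min hex hm)).trans (Nat.find_spec hex).le
      · exact le_rfl

namespace Moran

variable {ι M : Type*}

theorem mem_cylinder_iff {i : List ι} {j : ℕ → ι} :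
    j ∈ cylinder i ↔ (fun k : Fin i.length => j k) = i.get := by
  rw [cylinder, mem_ofPred_eq, pre, ← List.ofFn_inj, List.ofFn_get]

theorem isOpen_cylinder [TopologicalSpace ι] [DiscreteTopology ι] (i : List ι) :
    IsOpen (cylinder i) := by
  have : cylinder i = (fun j (k : Fin i.length) => j k) ⁻¹' {i.get} := by
    ext j; exact mem_cylinder_iff
  rw [this]
  exact (isOpen_discrete _).preimage (continuous_pi fun k => continuous_apply _)

theorem pre_prefix_pre (j : ℕ → ι) {m n : ℕ} (h : m ≤ n) : pre j m <+: pre j n := by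
  simp only [List.prefix_iff_eq_take, pre, List.length_ofFn]
  rw [← Fin.ofFn_take_eq_take_ofFn h]
  rfl

theorem exists_pre_length_eq [Nonempty ι] (l : List ι) : ∃ j : ℕ → ι, pre j l.length = l :=
  ⟨fun k => l.getD k (Classical.arbitrary ι), List.ext_getElem (by simp [pre]) fun k h _ => by
    simp [pre]⟩

theorem exists_prefix_of_univ_subset [Nonempty ι] {F : Set (List ι)}
    (hF : univ ⊆ ⋃ i ∈ F, cylinder i) {l : List ι} (hl : ∀ i ∈ F, i.length ≤ l.length) :
    ∃ i ∈ F, i <+: l := by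
  obtain ⟨j, hj⟩ := exists_pre_length_eq l
  obtain ⟨i, hiF, hji⟩ := mem_iUnion₂.1 (hF (mem_univ j))
  exact ⟨i, hiF, hji ▸ hj ▸ pre_prefix_pre j (hl i hiF)⟩

theorem ofReal_le_Mpsin_univ [Finite ι] {ψ : List ι → ℝ} (hψ : ∀ i, 0 ≤ ψ i) {c : ℝ}
    (hc : ∀ F : Finset (List ι), (∀ i ∈ F, i ≠ []) → univ ⊆ ⋃ i ∈ F, cylinder i →
      c ≤ ∑ i ∈ F, ψ i) (n : ℕ) :
    ENNReal.ofReal c ≤ Mpsin ψ n univ := by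
  classical
  refine le_iInf₂ fun C hC => le_iInf fun hcov => ?_
  let _ : TopologicalSpace ι := ⊥
  have : DiscreteTopology ι := ⟨rfl⟩
  obtain ⟨F, hFC, hFfin, hFcov⟩ :=
    isCompact_univ.elim_finite_subcover_image (fun i _ => isOpen_cylinder i) hcov
  lift F to Finset (List ι) using hFfin
  calc ENNReal.ofReal c
      ≤ ENNReal.ofReal (∑ i ∈ F, ψ i) :=
        ENNReal.ofReal_le_ofReal (hc F (fun i hi => (hC i (hFC hi)).1) (by simpa using hFcov))
    _ = ∑ i ∈ F.subtype (· ∈ C), ENNReal.ofReal (ψ i) := by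
        rw [ENNReal.ofReal_sum_of_nonneg fun i _ => hψ i,
          Finset.sum_subtype_of_mem (fun i => ENNReal.ofReal (ψ i)) fun i hi => hFC hi]
    _ ≤ ∑' i : C, ENNReal.ofReal (ψ i) := ENNReal.sum_le_tsum _

section Pressure

variable [Fintype ι] [MetricSpace M]

variable (ι) in
def words (n : ℕ) : Finset (List ι) :=
  (Finset.univ : Finset (Fin n → ι)).map ⟨List.ofFn, List.ofFn_injective⟩

@[simp]
theorem mem_words {n : ℕ} {l : List ι} : l ∈ words ι n ↔ l.length = n := by
  simp only [words, Finset.mem_map, Finset.mem_univ, true_and, Function.Embedding.coeFn_mk]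
  constructor
  · rintro ⟨f, rfl⟩
    exact List.length_ofFn
  · rintro rfl
    exact ⟨l.get, List.ofFn_get l⟩

theorem presSum_eq_sum_words (X : List ι → Set M) (t : ℝ) (n : ℕ) :
    presSum X t n = ∑ l ∈ words ι n, diam (X l) ^ t := by
  simp [presSum, words]

namespace WCMC

variable (W : WCMC ι M) {t : ℝ}

theorem D_pos : 0 < W.D := zero_lt_one.trans_le W.one_le_D

theorem presSum_pos [Nonempty ι] (t : ℝ) {n : ℕ} (hn : n ≠ 0) : 0 < presSum W.X t n := by
  rw [presSum_eq_sum_words]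
  refine Finset.sum_pos (fun l hl => Real.rpow_pos_of_pos (W.diam_pos l ?_) t) ?_
  · rintro rfl
    exact hn (mem_words.1 hl).symm
  · exact ⟨List.replicate n (Classical.arbitrary ι), by simp⟩

theorem diam_append_rpow_le (ht : 0 ≤ t) {i j : List ι} (hi : i ≠ []) (hj : j ≠ []) :
    diam (W.X (i ++ j)) ^ t ≤ W.D ^ t * diam (W.X i) ^ t * diam (W.X j) ^ t := by
  rw [← Real.mul_rpow W.D_pos.le diam_nonneg,
    ← Real.mul_rpow (mul_nonneg W.D_pos.le diam_nonneg) diam_nonneg]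
  exact Real.rpow_le_rpow diam_nonneg (W.submult i j hi hj) ht

theorem sum_words_prefix_le [DecidableEq ι] (ht : 0 ≤ t) {i : List ι} (hi : i ≠ []) {N : ℕ}
    (hiN : i.length < N) :
    ∑ l ∈ words ι N with i <+: l, diam (W.X l) ^ t ≤
      W.D ^ t * diam (W.X i) ^ t * presSum W.X t (N - i.length) := by
  calc ∑ l ∈ words ι N with i <+: l, diam (W.X l) ^ t
      = ∑ u ∈ words ι (N - i.length), diam (W.X (i ++ u)) ^ t := by
        refine Finset.sum_nbij' (fun l => l.drop i.length) (fun u => i ++ u) ?_ ?_ ?_ ?_ ?_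
        · intro l hl
          rw [mem_words, List.length_drop, mem_words.1 (Finset.mem_filter.1 hl).1]
        · intro u hu
          refine Finset.mem_filter.2 ⟨mem_words.2 ?_, List.prefix_append _ _⟩
          rw [List.length_append, mem_words.1 hu]
          omega
        · intro l hl
          exact List.prefix_iff_eq_append.1 (Finset.mem_filter.1 hl).2
        · intro u _
          exact List.drop_left
        · intro l hl
          rw [List.prefix_iff_eq_append.1 (Finset.mem_filter.1 hl).2]
    _ ≤ ∑ u ∈ words ι (N - i.length), W.D ^ t * diam (W.X i) ^ t * diam (W.X u) ^ t := by
        refine Finset.sum_le_sum fun u hu => W.diam_append_rpow_le ht hi ?_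
        rintro rfl
        simp only [mem_words, List.length_nil] at hu
        omega
    _ = W.D ^ t * diam (W.X i) ^ t * presSum W.X t (N - i.length) := by
        rw [presSum_eq_sum_words, Finset.mul_sum]

theorem presSum_le_sum_prefix (ht : 0 ≤ t) {N : ℕ} {F : Finset (List ι)}
    (hF : ∀ i ∈ F, i ≠ [] ∧ i.length < N) (hcov : ∀ l : List ι, l.length = N → ∃ i ∈ F, i <+: l) :
    presSum W.X t N ≤ ∑ i ∈ F, W.D ^ t * diam (W.X i) ^ t * presSum W.X t (N - i.length) := by
  classical
  calc presSum W.X t N = ∑ l ∈ words ι N, diam (W.X l) ^ t := presSum_eq_sum_words _ _ _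
    _ ≤ ∑ l ∈ words ι N, ∑ i ∈ F with i <+: l, diam (W.X l) ^ t := by
        refine Finset.sum_le_sum fun l hl => ?_
        obtain ⟨i, hiF, hil⟩ := hcov l (mem_words.1 hl)
        exact Finset.single_le_sum (f := fun _ => diam (W.X l) ^ t)
          (fun _ _ => Real.rpow_nonneg diam_nonneg t) (Finset.mem_filter.2 ⟨hiF, hil⟩)
    _ = ∑ i ∈ F, ∑ l ∈ words ι N with i <+: l, diam (W.X l) ^ t :=
        Finset.sum_comm' fun l i => by simp only [Finset.mem_filter]; tauto
    _ ≤ _ := Finset.sum_le_sum fun i hi => W.sum_words_prefix_le ht (hF i hi).1 (hF i hi).2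

theorem presSum_add_le (ht : 0 ≤ t) {a b : ℕ} (ha : a ≠ 0) (hb : b ≠ 0) :
    presSum W.X t (a + b) ≤ W.D ^ t * presSum W.X t a * presSum W.X t b := by
  calc presSum W.X t (a + b)
      ≤ ∑ i ∈ words ι a, W.D ^ t * diam (W.X i) ^ t * presSum W.X t (a + b - i.length) := by
        refine W.presSum_le_sum_prefix ht (fun i hi => ⟨?_, ?_⟩) fun l hl =>
          ⟨l.take a, by simp [hl], List.take_prefix _ _⟩
        · rintro rfl
          exact ha (mem_words.1 hi).symm
        · rw [mem_words.1 hi]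
          omega
    _ = W.D ^ t * presSum W.X t a * presSum W.X t b := by
        rw [presSum_eq_sum_words W.X t a, Finset.mul_sum, Finset.sum_mul]
        refine Finset.sum_congr rfl fun i hi => ?_
        rw [mem_words.1 hi, Nat.add_sub_cancel_left]

theorem one_le_rpow_D_mul_presSum [Nonempty ι] {P : ℝ → ℝ} (hP : IsPressure W.X P)
    (ht : 0 ≤ t) (hPt : 0 ≤ P t) {m : ℕ} (hm : m ≠ 0) : 1 ≤ W.D ^ t * presSum W.X t m := by
  have hD : 0 < W.D ^ t := Real.rpow_pos_of_pos W.D_pos t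
  have hpos : ∀ n, n ≠ 0 → 0 < W.D ^ t * presSum W.X t n := fun n hn =>
    mul_pos hD (W.presSum_pos t hn)
  have hmul : ∀ a b, a ≠ 0 → b ≠ 0 → W.D ^ t * presSum W.X t (a + b) ≤
      W.D ^ t * presSum W.X t a * (W.D ^ t * presSum W.X t b) := fun a b ha hb => by
    have := mul_le_mul_of_nonneg_left (W.presSum_add_le ht ha hb) hD.le
    linarith
  have hL : Tendsto (fun n : ℕ => Real.log (W.D ^ t * presSum W.X t n) / n) atTop (𝓝 (P t)) := by
    have h0 : Tendsto (fun n : ℕ => Real.log (W.D ^ t) / n) atTop (𝓝 0) :=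
      tendsto_const_nhds.div_atTop tendsto_natCast_atTop_atTop
    have h1 := h0.add (hP t ht)
    rw [zero_add] at h1
    refine h1.congr' <| (eventually_ne_atTop 0).mono fun n hn => ?_
    dsimp only
    rw [Real.log_mul hD.ne' (W.presSum_pos t hn).ne']
    ring
  have hle := hPt.trans (Real.le_log_div_of_tendsto_of_submultiplicative hpos hmul hL hm)
  rw [← Real.log_nonneg_iff (hpos m hm)]
  simpa using (le_div_iff₀ (Nat.cast_pos.2 (Nat.pos_of_ne_zero hm))).1 hle

theorem inv_le_sum_of_univ_subset [Nonempty ι] (ht : 0 ≤ t) {K : ℝ} (hK : 0 < K)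
    (hrec : ∃ᶠ N in atTop, ∀ m ≤ N,
      W.D ^ t * presSum W.X t m ≤ K * (W.D ^ t * presSum W.X t N))
    {F : Finset (List ι)} (hF : ∀ i ∈ F, i ≠ []) (hcov : univ ⊆ ⋃ i ∈ F, cylinder i) :
    (K * W.D ^ t)⁻¹ ≤ ∑ i ∈ F, diam (W.X i) ^ t := by
  obtain ⟨N, hrecN, hN⟩ := (hrec.and_eventually (eventually_gt_atTop (F.sup List.length))).exists
  have hlen : ∀ i ∈ F, i.length < N := fun i hi => (Finset.le_sup hi).trans_lt hN
  have hD : 0 < W.D ^ t := Real.rpow_pos_of_pos W.D_pos t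
  have hS : 0 < presSum W.X t N := W.presSum_pos t (by omega)
  have key :
      presSum W.X t N ≤ ((∑ i ∈ F, diam (W.X i) ^ t) * (K * W.D ^ t)) * presSum W.X t N :=
    calc presSum W.X t N
        ≤ ∑ i ∈ F, W.D ^ t * diam (W.X i) ^ t * presSum W.X t (N - i.length) :=
          W.presSum_le_sum_prefix ht (fun i hi => ⟨hF i hi, hlen i hi⟩) fun l hl =>
            exists_prefix_of_univ_subset (F := F) (by simpa using hcov) fun i hi =>
              hl ▸ (hlen i hi).le
      _ ≤ ∑ i ∈ F, diam (W.X i) ^ t * (K * (W.D ^ t * presSum W.X t N)) := by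
          refine Finset.sum_le_sum fun i _ => ?_
          rw [mul_comm (W.D ^ t), mul_assoc]
          exact mul_le_mul_of_nonneg_left (hrecN _ (Nat.sub_le _ _))
            (Real.rpow_nonneg diam_nonneg t)
      _ = ((∑ i ∈ F, diam (W.X i) ^ t) * (K * W.D ^ t)) * presSum W.X t N := by
          rw [← Finset.sum_mul]
          ring
  rw [inv_le_iff_one_le_mul₀ (by positivity)]
  exact le_of_mul_le_mul_right (by simpa using key) hS

end WCMC

end Pressure

end Moran

/-- Given a WCMC and any `t ≥ 0` with pressure `P(t) ≥ 0`, the set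
function `M^t` satisfies `M^t(I^∞) > 0`. -/
theorem stmt4 {ι M : Type*} [Fintype ι] [MetricSpace M]
    (hcard : 2 ≤ Fintype.card ι) (W : Moran.WCMC ι M)
    (P : ℝ → ℝ) (hP : Moran.IsPressure W.X P)
    (t : ℝ) (ht : 0 ≤ t) (hPt : 0 ≤ P t) :
    0 < Moran.Mpsi (fun i : List ι => Metric.diam (W.X i) ^ t)
      (Set.univ : Set (ℕ → ι)) := by
  have : Nonempty ι := Fintype.card_pos_iff.1 (by omega)
  obtain ⟨K, hK, hrec⟩ := exists_pos_frequently_forall_le_mul <|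
    (eventually_ne_atTop 0).mono fun m => W.one_le_rpow_D_mul_presSum hP ht hPt
  have hc : 0 < (K * W.D ^ t)⁻¹ := by
    have := Real.rpow_pos_of_pos W.D_pos t
    positivity
  calc 0 < ENNReal.ofReal (K * W.D ^ t)⁻¹ := ENNReal.ofReal_pos.2 hc
    _ ≤ Moran.Mpsin (fun i : List ι => diam (W.X i) ^ t) 0 univ :=
        Moran.ofReal_le_Mpsin_univ (fun i => Real.rpow_nonneg diam_nonneg t)
          (fun F hF hcov => W.inv_le_sum_of_univ_subset ht hK hrec hF hcov) 0
    _ ≤ _ := le_iSup (fun n => Moran.Mpsin _ n univ) 0
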